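/- arXiv:1108.5537 — 3 statements merged into one kernel-verified Lean document; each statement's English description precedes it below -/
import Mathlib

section
/- Let (G, ℓ) be a labelled graph with a fixed orientation, and let q be a positive integer admissible for ℓ. Then for any regular edge e ∈ R, the number of arithmetic nowhere-zero q-flows of (G, ℓ) equals the number of arithmetic nowhere-zero q-flows of the contraction (G/e, ℓ) minus the number of arithmetic nowhere-zero q-flows of the deletion (G − e, ℓ). -/
/-- An arithmetic nowhere-zero `q`-flow on the labelled oriented graph with orientation `o`,
labels `ℓ`, surviving edges `S` (edges outside `S` are deleted, i.e. carry flow `0`) and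
regular edges `R`. -/
def IsAFlowS {V E : Type*} [Fintype E] [DecidableEq V] (o : E → V × V) (ℓ : E → ℕ) (q : ℕ)
    (S R : Finset E) (w : E → ZMod q) : Prop :=
  (∀ e ∉ S, w e = 0) ∧
  (∀ v : V,
      ∑ e ∈ Finset.univ.filter (fun e => (o e).1 = v), (ℓ e : ZMod q) * w e
        = ∑ e ∈ Finset.univ.filter (fun e => (o e).2 = v), (ℓ e : ZMod q) * w e) ∧
  ∀ e ∈ R, w e ≠ 0

/-- Deletion–contraction for arithmetic flows: for a regular edge `e`,
`χ*(G) = χ*(G/e) − χ*(G − e)`, where contraction makes `e` dotted and deletion removes it. -/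
theorem stmt2 {V E : Type*} [Fintype V] [Fintype E] [DecidableEq V] [DecidableEq E]
    (o : E → V × V) (hloop : ∀ e, (o e).1 ≠ (o e).2)
    (R : Finset E) (ℓ : E → ℕ) (hℓ : ∀ e, 0 < ℓ e)
    (q : ℕ) (hq : 0 < q) (hadm : ∀ e, ℓ e ∣ q) (e : E) (he : e ∈ R) :
    (Nat.card {w : E → ZMod q // IsAFlowS o ℓ q Finset.univ R w} : ℤ)
      = Nat.card {w : E → ZMod q // IsAFlowS o ℓ q Finset.univ (R.erase e) w}
        - Nat.card {w : E → ZMod q // IsAFlowS o ℓ q (Finset.univ.erase e) (R.erase e) w} := by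
  haveI : NeZero q := ⟨hq.ne'⟩
  set A : Set (E → ZMod q) := {w | IsAFlowS o ℓ q Finset.univ R w} with hA
  set B : Set (E → ZMod q) := {w | IsAFlowS o ℓ q Finset.univ (R.erase e) w} with hB
  set C : Set (E → ZMod q) := {w | IsAFlowS o ℓ q (Finset.univ.erase e) (R.erase e) w} with hC
  have hBeq : B = A ∪ C := by
    ext w
    simp only [hA, hB, hC, Set.mem_setOf_eq, Set.mem_union, IsAFlowS]
    constructor
    · rintro ⟨h1, h2, h3⟩
      by_cases hw : w e = 0
      · right
        refine ⟨fun f hf => ?_, h2, h3⟩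
        have : f = e := by
          by_contra hfe
          exact hf (Finset.mem_erase.mpr ⟨hfe, Finset.mem_univ f⟩)
        rw [this]; exact hw
      · left
        refine ⟨h1, h2, fun f hf => ?_⟩
        by_cases hfe : f = e
        · rw [hfe]; exact hw
        · exact h3 f (Finset.mem_erase.mpr ⟨hfe, hf⟩)
    · rintro (⟨h1, h2, h3⟩ | ⟨h1, h2, h3⟩)
      · exact ⟨h1, h2, fun f hf => h3 f (Finset.mem_of_mem_erase hf)⟩
      · exact ⟨fun f hf => absurd (Finset.mem_univ f) hf, h2, h3⟩
  have hdisj : Disjoint A C := by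
    rw [Set.disjoint_left]
    rintro w ⟨h1, h2, h3⟩ ⟨h1', h2', h3'⟩
    exact h3 e he (h1' e (fun h => (Finset.mem_erase.mp h).1 rfl))
  have hAfin : A.Finite := Set.toFinite A
  have hCfin : C.Finite := Set.toFinite C
  have hcard : B.ncard = A.ncard + C.ncard := by
    rw [hBeq, Set.ncard_union_eq hdisj hAfin hCfin]
  have hca : Nat.card {w : E → ZMod q // IsAFlowS o ℓ q Finset.univ R w} = A.ncard := by
    rw [← Nat.card_coe_set_eq]; rfl
  have hcb : Nat.card {w : E → ZMod q // IsAFlowS o ℓ q Finset.univ (R.erase e) w} = B.ncard := by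
    rw [← Nat.card_coe_set_eq]; rfl
  have hcc : Nat.card {w : E → ZMod q // IsAFlowS o ℓ q (Finset.univ.erase e) (R.erase e) w}
      = C.ncard := by
    rw [← Nat.card_coe_set_eq]; rfl
  rw [hca, hcb, hcc, hcard]
  push_cast
  ring
end

section
/- Let G = (V, E) be a finite loopless graph with k connected components, with a fixed orientation, and let χ*_G(q) denote the number of nowhere-zero ℤ/qℤ-flows on G. Then χ*_G(q) = (−1)^{|E|−|V|+k} T_G(0, 1 − q), where T_G is the Tutte polynomial of the graphic matroid of G. -/
/-- The number of connected components of the multigraph on `V` whose edges are the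
elements of `A`, with endpoints given by `ends`. -/
noncomputable def numComponents {V E : Type*} [Fintype V] (ends : E → V × V)
    (A : Finset E) : ℕ :=
  Nat.card (Quot (fun u v : V => ∃ e ∈ A, ends e = (u, v) ∨ ends e = (v, u)))

/-- The rank of an edge subset in the graphic matroid of the multigraph. -/
noncomputable def multigraphRk {V E : Type*} [Fintype V] (ends : E → V × V)
    (A : Finset E) : ℕ :=
  Fintype.card V - numComponents ends A

/-- The Tutte polynomial of the graphic matroid of the multigraph, evaluated at `(x, y)`. -/
noncomputable def multigraphTutte {V E : Type*} [Fintype V] [Fintype E]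
    (ends : E → V × V) (x y : ℤ) : ℤ :=
  ∑ A ∈ (Finset.univ : Finset E).powerset,
    (x - 1) ^ (multigraphRk ends Finset.univ - multigraphRk ends A)
      * (y - 1) ^ (A.card - multigraphRk ends A)

/-!
The flows supported on an edge set `A` form a group of order `|Γ| ^ (|A| - rk A)`. Adding an
edge `e` to `A` multiplies this order by `|Γ|` when the ends of `e` are already connected in `A`
(any value can be circulated around a cycle through `e`), and leaves it unchanged otherwise
(the net flow out of a component of `A` is zero, so it vanishes on `e`). Inclusion–exclusion over
the edges on which a flow vanishes gives `∑_A (-1) ^ (|E| - |A|) |Γ| ^ (|A| - rk A)` nowhere-zero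
flows, which is `(-1) ^ (|E| - rk E) T_G(0, 1 - |Γ|)` term by term.
-/

open Finset

theorem Nat.card_add_one_of_surjective_of_injOn {α β : Type*} [Finite α] {f : α → β}
    (hf : Function.Surjective f) {a b : α} (hab : a ≠ b) (hfab : f a = f b)
    (hinj : Set.InjOn f {b}ᶜ) : Nat.card β + 1 = Nat.card α := by
  classical
  have hcard : Nat.card {x // x ≠ b} = Nat.card β := by
    refine Nat.card_congr (Equiv.ofBijective (fun x => f x) ⟨fun x y h => Subtype.ext ?_, ?_⟩)
    · exact hinj x.2 y.2 h
    · intro y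
      obtain ⟨x, rfl⟩ := hf y
      by_cases hx : x = b
      · exact ⟨⟨a, hab⟩, hx ▸ hfab⟩
      · exact ⟨⟨x, hx⟩, rfl⟩
  rw [← hcard, ← Finite.card_option, Nat.card_congr (Equiv.optionSubtypeNe b)]

section Components

variable {V E : Type*} (ends : E → V × V)

def multigraphAdj (A : Finset E) (u v : V) : Prop :=
  ∃ e ∈ A, ends e = (u, v) ∨ ends e = (v, u)

theorem multigraphAdj_insert [DecidableEq E] {A : Finset E} {e : E} {u v : V} :
    multigraphAdj ends (insert e A) u v ↔
      (ends e = (u, v) ∨ ends e = (v, u)) ∨ multigraphAdj ends A u v := by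
  simp [multigraphAdj]

variable [Fintype V]

theorem numComponents_eq_card_quot (A : Finset E) :
    numComponents ends A = Nat.card (Quot (multigraphAdj ends A)) := rfl

theorem numComponents_empty : numComponents ends (∅ : Finset E) = Fintype.card V := by
  rw [numComponents, ← Nat.card_eq_fintype_card]
  exact Nat.card_congr
    { toFun := Quot.lift id (by simp)
      invFun := Quot.mk _
      left_inv := by rintro ⟨v⟩; rfl
      right_inv := fun _ => rfl }

theorem numComponents_le_card (A : Finset E) : numComponents ends A ≤ Fintype.card V := by
  rw [← Nat.card_eq_fintype_card]
  exact Nat.card_le_card_of_surjective _ Quot.mk_surjective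

theorem numComponents_anti {A B : Finset E} (h : A ⊆ B) :
    numComponents ends B ≤ numComponents ends A :=
  Nat.card_le_card_of_surjective
    (Quot.map id fun _ _ ⟨e, he, hends⟩ => ⟨e, h he, hends⟩ :
      Quot (multigraphAdj ends A) → _)
    (by rintro ⟨v⟩; exact ⟨Quot.mk _ v, rfl⟩)

variable [DecidableEq E] {A : Finset E} {e : E}

theorem numComponents_insert_of_connected
    (h : Quot.mk (multigraphAdj ends A) (ends e).1 = Quot.mk _ (ends e).2) :
    numComponents ends (insert e A) = numComponents ends A := by
  rw [numComponents_eq_card_quot, numComponents_eq_card_quot]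
  refine Nat.card_congr
    { toFun := Quot.lift (Quot.mk (multigraphAdj ends A)) fun u v huv => ?_
      invFun := Quot.map id fun _ _ ⟨e', he', hends⟩ => ⟨e', mem_insert_of_mem he', hends⟩
      left_inv := by rintro ⟨v⟩; rfl
      right_inv := by rintro ⟨v⟩; rfl }
  rcases (multigraphAdj_insert ends).1 huv with (hends | hends) | hA
  · simpa [hends] using h
  · simpa [hends] using h.symm
  · exact Quot.sound hA

theorem numComponents_insert_of_not_connected
    (h : Quot.mk (multigraphAdj ends A) (ends e).1 ≠ Quot.mk _ (ends e).2) :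
    numComponents ends (insert e A) + 1 = numComponents ends A := by
  classical
  rw [numComponents_eq_card_quot, numComponents_eq_card_quot]
  set u := (ends e).1
  set v := (ends e).2
  let π : Quot (multigraphAdj ends A) → Quot (multigraphAdj ends (insert e A)) :=
    Quot.map id fun _ _ ⟨e', he', hends⟩ => ⟨e', mem_insert_of_mem he', hends⟩
  -- merging the class of `v` into that of `u` gives a left inverse of `π` off the class of `v`
  let ψ : V → Quot (multigraphAdj ends A) := fun x =>
    if Quot.mk (multigraphAdj ends A) x = Quot.mk _ v then Quot.mk _ u else Quot.mk _ x
  have hψ : ∀ x y, multigraphAdj ends (insert e A) x y → ψ x = ψ y := by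
    intro x y hxy
    rcases (multigraphAdj_insert ends).1 hxy with (hends | hends) | hA
    · obtain ⟨rfl, rfl⟩ : u = x ∧ v = y := by simp [u, v, hends]
      simp [ψ]
    · obtain ⟨rfl, rfl⟩ : u = y ∧ v = x := by simp [u, v, hends]
      simp [ψ]
    · simp only [ψ, Quot.sound hA]
  let ρ := Quot.lift ψ hψ
  have hρ : ∀ z, z ≠ Quot.mk _ v → ρ (π z) = z := by
    rintro ⟨x⟩ hx
    exact if_neg hx
  refine Nat.card_add_one_of_surjective_of_injOn (f := π) ?_ h
    (Quot.sound ⟨e, mem_insert_self e A, Or.inl rfl⟩) ?_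
  · rintro ⟨x⟩; exact ⟨Quot.mk _ x, rfl⟩
  · intro z hz z' hz' hzz'
    rw [← hρ z hz, ← hρ z' hz', hzz']

end Components

section Rank

variable {V E : Type*} [Fintype V] (ends : E → V × V) {A : Finset E} {e : E}

theorem multigraphRk_mono {B : Finset E} (h : A ⊆ B) :
    multigraphRk ends A ≤ multigraphRk ends B :=
  Nat.sub_le_sub_left (numComponents_anti ends h) _

variable [DecidableEq E]

theorem multigraphRk_insert_of_connected
    (h : Quot.mk (multigraphAdj ends A) (ends e).1 = Quot.mk _ (ends e).2) :
    multigraphRk ends (insert e A) = multigraphRk ends A := by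
  rw [multigraphRk, multigraphRk, numComponents_insert_of_connected ends h]

theorem multigraphRk_insert_of_not_connected
    (h : Quot.mk (multigraphAdj ends A) (ends e).1 ≠ Quot.mk _ (ends e).2) :
    multigraphRk ends (insert e A) = multigraphRk ends A + 1 := by
  have := numComponents_insert_of_not_connected ends h
  have := numComponents_le_card ends A
  rw [multigraphRk, multigraphRk]
  omega

theorem multigraphRk_le_card (A : Finset E) : multigraphRk ends A ≤ #A := by
  induction A using Finset.induction_on with
  | empty => simp [multigraphRk, numComponents_empty]
  | @insert e A he ih =>
    rw [card_insert_of_notMem he]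
    by_cases h : Quot.mk (multigraphAdj ends A) (ends e).1 = Quot.mk _ (ends e).2
    · rw [multigraphRk_insert_of_connected ends h]; omega
    · rw [multigraphRk_insert_of_not_connected ends h]; omega

end Rank

section Flows

variable {V E : Type*} (ends : E → V × V) {Γ : Type*} [AddCommGroup Γ]

def supportedOn (A : Finset E) : AddSubgroup (E → Γ) :=
  AddSubgroup.pi (↑A)ᶜ fun _ => ⊥

theorem mem_supportedOn {A : Finset E} {w : E → Γ} :
    w ∈ supportedOn A ↔ ∀ e ∉ A, w e = 0 := by
  simp [supportedOn, AddSubgroup.mem_pi]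

variable [Fintype E] [DecidableEq V]

variable (Γ) in
def boundary : (E → Γ) →+ (V → Γ) where
  toFun w := ∑ e, (Pi.single (ends e).1 (w e) - Pi.single (ends e).2 (w e))
  map_zero' := by simp
  map_add' w w' := by
    simp only [Pi.add_apply, Pi.single_add, ← sum_add_distrib]
    exact sum_congr rfl fun _ _ => by abel

variable {ends}

theorem boundary_apply (w : E → Γ) (v : V) :
    boundary ends Γ w v = ∑ e with (ends e).1 = v, w e - ∑ e with (ends e).2 = v, w e := by
  simp [boundary, Finset.sum_apply, Pi.single_apply, sum_filter, eq_comm]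

theorem boundary_single [DecidableEq E] (e : E) (a : Γ) :
    boundary ends Γ (Pi.single e a) = Pi.single (ends e).1 a - Pi.single (ends e).2 a := by
  simp only [boundary, AddMonoidHom.coe_mk, ZeroHom.coe_mk]
  rw [Fintype.sum_eq_single e fun e' he' => by simp [Pi.single_eq_of_ne he']]
  simp

theorem sum_boundary (C : Finset V) (w : E → Γ) :
    ∑ v ∈ C, boundary ends Γ w v =
      ∑ e, ((if (ends e).1 ∈ C then w e else 0) - (if (ends e).2 ∈ C then w e else 0)) := by
  simp only [boundary, AddMonoidHom.coe_mk, ZeroHom.coe_mk, Finset.sum_apply, Pi.sub_apply]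
  rw [sum_comm]
  simp [sum_sub_distrib, Pi.single_apply]

variable (ends Γ) in
def flows (A : Finset E) : AddSubgroup (E → Γ) :=
  supportedOn A ⊓ (boundary ends Γ).ker

theorem mem_flows {A : Finset E} {w : E → Γ} :
    w ∈ flows ends Γ A ↔ (∀ e ∉ A, w e = 0) ∧ boundary ends Γ w = 0 := by
  rw [flows, AddSubgroup.mem_inf, mem_supportedOn, AddMonoidHom.mem_ker]

theorem flows_mono {A B : Finset E} (h : A ⊆ B) : flows ends Γ A ≤ flows ends Γ B := by
  intro w hw
  rw [mem_flows] at hw ⊢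
  exact ⟨fun e he => hw.1 e fun heA => he (h heA), hw.2⟩

theorem card_nowhereZero_flows [Finite Γ] :
    (Nat.card {w : E → Γ // boundary ends Γ w = 0 ∧ ∀ e, w e ≠ 0} : ℤ) =
      ∑ A ∈ (univ : Finset E).powerset,
        (-1) ^ (Fintype.card E - #A) * (Nat.card (flows ends Γ A) : ℤ) := by
  classical
  have := Fintype.ofFinite Γ
  let S : E → Finset (E → Γ) := fun e => {w | w e = 0}
  let f : (E → Γ) → ℤ := fun w => if boundary ends Γ w = 0 then 1 else 0
  have hcount : ∀ t : Finset E, ∑ w ∈ t.inf S, f w = Nat.card (flows ends Γ tᶜ) := by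
    intro t
    rw [sum_boole, Nat.card_eq_fintype_card, Fintype.card_subtype]
    congr 2
    ext w
    simp [S, mem_inf, mem_flows]
  calc (Nat.card {w : E → Γ // boundary ends Γ w = 0 ∧ ∀ e, w e ≠ 0} : ℤ)
      = ∑ w ∈ univ.inf fun e => (S e)ᶜ, f w := by
        rw [sum_boole, Nat.card_eq_fintype_card, Fintype.card_subtype]
        congr 2
        ext w
        simp [S, mem_inf, and_comm]
    _ = ∑ t ∈ univ.powerset, (-1) ^ #t • ∑ w ∈ t.inf S, f w :=
        inclusion_exclusion_sum_inf_compl univ S f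
    _ = ∑ A ∈ (univ : Finset E).powerset,
          (-1) ^ (Fintype.card E - #A) * (Nat.card (flows ends Γ A) : ℤ) := by
        simp only [hcount, smul_eq_mul, powerset_univ]
        refine Fintype.sum_equiv (compl_involutive.toPerm _) _ _ fun t => ?_
        simp [card_compl, Nat.sub_sub_self (card_le_univ t)]

variable [DecidableEq E] {A : Finset E} {e : E}

theorem exists_mem_supportedOn_boundary_eq {u v : V}
    (h : Quot.mk (multigraphAdj ends A) u = Quot.mk _ v) (a : Γ) :
    ∃ w ∈ supportedOn A, boundary ends Γ w = Pi.single u a - Pi.single v a := by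
  rw [Quot.eq] at h
  induction h generalizing a with
  | rel x y hxy =>
    obtain ⟨e, he, hends | hends⟩ := hxy
    · refine ⟨Pi.single e a, ?_, by rw [boundary_single, hends]⟩
      exact mem_supportedOn.2 fun e' he' => Pi.single_eq_of_ne (by rintro rfl; exact he' he) _
    · refine ⟨Pi.single e (-a), ?_, ?_⟩
      · exact mem_supportedOn.2 fun e' he' => Pi.single_eq_of_ne (by rintro rfl; exact he' he) _
      · rw [boundary_single, hends, Pi.single_neg, Pi.single_neg]
        abel
  | refl x => exact ⟨0, zero_mem _, by simp⟩
  | symm x y _ ih =>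
    obtain ⟨w, hw, hbw⟩ := ih (-a)
    exact ⟨w, hw, by rw [hbw, Pi.single_neg, Pi.single_neg]; abel⟩
  | trans x y z _ _ ih₁ ih₂ =>
    obtain ⟨w₁, hw₁, hbw₁⟩ := ih₁ a
    obtain ⟨w₂, hw₂, hbw₂⟩ := ih₂ a
    exact ⟨w₁ + w₂, add_mem hw₁ hw₂, by rw [map_add, hbw₁, hbw₂]; abel⟩

theorem mem_flows_iff_of_notMem (he : e ∉ A) {w : E → Γ} :
    w ∈ flows ends Γ A ↔ w ∈ flows ends Γ (insert e A) ∧ w e = 0 := by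
  refine ⟨fun hw => ⟨flows_mono (subset_insert e A) hw, (mem_flows.1 hw).1 e he⟩, ?_⟩
  rintro ⟨hw, hwe⟩
  rw [mem_flows] at hw ⊢
  refine ⟨fun e' he' => ?_, hw.2⟩
  by_cases he'e : e' = e
  · rwa [he'e]
  · exact hw.1 e' (by simp [he'e, he'])

theorem card_flows_insert_of_connected (he : e ∉ A)
    (h : Quot.mk (multigraphAdj ends A) (ends e).1 = Quot.mk _ (ends e).2) :
    Nat.card (flows ends Γ (insert e A)) = Nat.card Γ * Nat.card (flows ends Γ A) := by
  choose s hs hbs using exists_mem_supportedOn_boundary_eq (Γ := Γ) h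
  -- `c a` circulates `a` around a cycle through `e`
  let c : Γ → E → Γ := fun a => Pi.single e a - s a
  have hc : ∀ a, c a ∈ flows ends Γ (insert e A) := by
    intro a
    rw [mem_flows]
    refine ⟨fun e' he' => ?_, by simp [c, boundary_single, hbs]⟩
    have he'e : e' ≠ e := fun h => he' (h ▸ mem_insert_self e A)
    simp [c, he'e, mem_supportedOn.1 (hs a) e' fun h => he' (mem_insert_of_mem h)]
  have hce : ∀ a, c a e = a := fun a => by simp [c, mem_supportedOn.1 (hs a) e he]
  rw [← Nat.card_prod]
  exact Nat.card_congr
    { toFun := fun w => (w.1 e, ⟨w - c (w.1 e),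
        (mem_flows_iff_of_notMem he).2 ⟨sub_mem w.2 (hc _), by simp [hce]⟩⟩)
      invFun := fun p => ⟨p.2 + c p.1, add_mem (flows_mono (subset_insert e A) p.2.2) (hc _)⟩
      left_inv := fun w => by ext; simp
      right_inv := fun p => by ext <;> simp [hce, ((mem_flows_iff_of_notMem he).1 p.2.2).2] }

variable [Fintype V]

theorem apply_eq_zero_of_mem_flows_insert
    (h : Quot.mk (multigraphAdj ends A) (ends e).1 ≠ Quot.mk _ (ends e).2) {w : E → Γ}
    (hw : w ∈ flows ends Γ (insert e A)) : w e = 0 := by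
  classical
  rw [mem_flows] at hw
  -- the net flow out of the component of `(ends e).1` in `A` is carried by `e` alone
  let C : Finset V := {x | Quot.mk (multigraphAdj ends A) x = Quot.mk _ (ends e).1}
  have hnet := sum_boundary (ends := ends) C w
  simp only [hw.2, Pi.zero_apply, sum_const_zero] at hnet
  rw [Fintype.sum_eq_single e, eq_comm] at hnet
  · simpa [C, Ne.symm h] using hnet
  · intro e' he'
    by_cases hA : e' ∈ A
    · have hedge : Quot.mk (multigraphAdj ends A) (ends e').1 = Quot.mk _ (ends e').2 :=
        Quot.sound ⟨e', hA, Or.inl rfl⟩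
      have : (ends e').1 ∈ C ↔ (ends e').2 ∈ C := by simp [C, hedge]
      simp only [this, sub_self]
    · simp [hw.1 e' (by simp [he', hA])]

theorem flows_insert_of_not_connected
    (h : Quot.mk (multigraphAdj ends A) (ends e).1 ≠ Quot.mk _ (ends e).2) :
    flows ends Γ (insert e A) = flows ends Γ A := by
  have he : e ∉ A := fun he => h (Quot.sound ⟨e, he, Or.inl rfl⟩)
  ext w
  rw [mem_flows_iff_of_notMem he]
  exact ⟨fun hw => ⟨hw, apply_eq_zero_of_mem_flows_insert h hw⟩, And.left⟩

theorem card_flows (A : Finset E) :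
    Nat.card (flows ends Γ A) = Nat.card Γ ^ (#A - multigraphRk ends A) := by
  induction A using Finset.induction_on with
  | empty =>
    have : flows ends Γ ∅ = ⊥ := eq_bot_iff.2 fun w hw =>
      AddSubgroup.mem_bot.2 (funext fun e => (mem_flows.1 hw).1 e (notMem_empty e))
    simp [this, multigraphRk, numComponents_empty]
  | @insert e A he ih =>
    have hle := multigraphRk_le_card ends A
    rw [card_insert_of_notMem he]
    by_cases h : Quot.mk (multigraphAdj ends A) (ends e).1 = Quot.mk _ (ends e).2
    · rw [card_flows_insert_of_connected he h, ih, multigraphRk_insert_of_connected ends h,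
        ← pow_succ']
      congr 1
      omega
    · rw [flows_insert_of_not_connected h, ih, multigraphRk_insert_of_not_connected ends h]
      congr 1
      omega

theorem card_nowhereZero_flows_eq_tutte [Finite Γ] :
    (Nat.card {w : E → Γ // boundary ends Γ w = 0 ∧ ∀ e, w e ≠ 0} : ℤ) =
      (-1) ^ (Fintype.card E + numComponents ends univ - Fintype.card V) *
        multigraphTutte ends 0 (1 - Nat.card Γ) := by
  rw [card_nowhereZero_flows, multigraphTutte, mul_sum]
  refine sum_congr rfl fun A _ => ?_
  have hrkA := multigraphRk_le_card ends A
  have hmono := multigraphRk_mono ends (subset_univ A)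
  have hA := card_le_univ A
  have hrkE : multigraphRk ends univ ≤ Fintype.card E :=
    card_univ (α := E) ▸ multigraphRk_le_card ends univ
  have hsign : Fintype.card E + numComponents ends univ - Fintype.card V =
      Fintype.card E - multigraphRk ends univ := by
    have := numComponents_le_card ends (univ : Finset E)
    rw [multigraphRk]
    omega
  have hparity : (Fintype.card E - multigraphRk ends univ) +
      (multigraphRk ends univ - multigraphRk ends A) + (#A - multigraphRk ends A) =
      (Fintype.card E - #A) + 2 * (#A - multigraphRk ends A) := by
    omega
  rw [card_flows, hsign, show (0 : ℤ) - 1 = -1 by norm_num,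
    show (1 : ℤ) - Nat.card Γ - 1 = -1 * Nat.card Γ by ring, mul_pow, ← mul_assoc,
    ← mul_assoc, ← pow_add, ← pow_add, hparity, pow_add, pow_mul]
  norm_num

end Flows

theorem stmt14_general {V E : Type*} [Fintype V] [Fintype E] [DecidableEq V]
    (ends : E → V × V) (q : ℕ) (hq : 0 < q) :
    (Nat.card {w : E → ZMod q //
        (∀ v : V,
          ∑ e ∈ Finset.univ.filter (fun e => (ends e).1 = v), w e
            = ∑ e ∈ Finset.univ.filter (fun e => (ends e).2 = v), w e) ∧
        ∀ e : E, w e ≠ 0} : ℤ)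
      = (-1) ^ (Fintype.card E + numComponents ends Finset.univ - Fintype.card V)
        * multigraphTutte ends 0 (1 - (q : ℤ)) := by
  classical
  have : NeZero q := ⟨hq.ne'⟩
  have hflow : ∀ w : E → ZMod q, (∀ v : V,
      ∑ e ∈ Finset.univ.filter (fun e => (ends e).1 = v), w e
        = ∑ e ∈ Finset.univ.filter (fun e => (ends e).2 = v), w e) ↔
      boundary ends (ZMod q) w = 0 := by
    intro w
    simp only [funext_iff, boundary_apply, Pi.zero_apply, sub_eq_zero]
  simp_rw [hflow]
  rw [card_nowhereZero_flows_eq_tutte, Nat.card_zmod]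

/-- Tutte's theorem for the flow polynomial: the number of nowhere-zero `ℤ/qℤ`-flows on a
finite loopless graph with `k` connected components is `(−1)^{|E|−|V|+k} T_G(0, 1−q)`. -/
theorem stmt14 {V E : Type*} [Fintype V] [Fintype E] [DecidableEq V]
    (ends : E → V × V) (hloop : ∀ e, (ends e).1 ≠ (ends e).2) (q : ℕ) (hq : 0 < q) :
    (Nat.card {w : E → ZMod q //
        (∀ v : V,
          ∑ e ∈ Finset.univ.filter (fun e => (ends e).1 = v), w e
            = ∑ e ∈ Finset.univ.filter (fun e => (ends e).2 = v), w e) ∧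
        ∀ e : E, w e ≠ 0} : ℤ)
      = (-1) ^ (Fintype.card E + numComponents ends Finset.univ - Fintype.card V)
        * multigraphTutte ends 0 (1 - (q : ℤ)) :=
  stmt14_general ends q hq
end

section
/- Let (G, ℓ) be a labelled connected graph all of whose edges are dotted, with vertex set V of size n and edge set D of size m, fix an orientation, and let [X_D] be the n × m incidence-type matrix whose column for an oriented edge e = (v_i, v_j) has ℓ(e) in row i, −ℓ(e) in row j, and 0 elsewhere. Let q be a positive integer with ℓ(e) | q for all e. Then the number of maps c : V → ℤ/qℤ with ℓ(e)·c(e⁺) = ℓ(e)·c(e⁻) for every edge e equals q · m(∅), where m(∅) is the cardinality of the torsion subgroup of ℤⁿ/⟨columns of [X_D]⟩. -/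
/-!
A coloring is a map `ℤ^V → ℤ/q` killing the columns of `[X_D]`, i.e. a homomorphism from the
cokernel `N = ℤ^V / ⟨columns⟩` to `ℤ/q`. The vertex-sum functional `σ : N → ℤ` has a section
(any basis vector maps to `1`). Since `ℓ(e) ∣ q`, `q(e_u - e_w)` is a multiple of a column for
every edge `uw`, hence, `G` being connected, for all `u, w`; so multiplication by `q` kills
`ker σ`. Hence `N ≅ ker σ × ℤ` with `ker σ` the finite torsion subgroup of `N`, so
`Hom(N, ℤ/q) ≅ Hom(ker σ, ℤ/q) × ℤ/q`, and the first factor has `|ker σ|` elements because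
`ℤ/q` has enough roots of unity for a group of exponent dividing `q`.
-/

/-- The labelled incidence matrix `[X_D]` of an oriented labelled graph: the column of an
edge `e = (v_i, v_j)` has `ℓ(e)` in row `v_i`, `−ℓ(e)` in row `v_j`, and `0` elsewhere. -/
def incMat {V E : Type*} [DecidableEq V] (ends : E → V × V) (ℓ : E → ℕ) :
    Matrix V E ℤ :=
  Matrix.of fun v e =>
    if (ends e).1 = v then (ℓ e : ℤ) else if (ends e).2 = v then -(ℓ e : ℤ) else 0

open Submodule LinearMap

open Multiplicative in
theorem hasEnoughRootsOfUnity_multiplicative_zmod (q : ℕ) [NeZero q] :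
    HasEnoughRootsOfUnity (Multiplicative (ZMod q)) q where
  prim := ⟨ofAdd 1, by
    simpa [orderOf_ofAdd_eq_addOrderOf] using IsPrimitiveRoot.orderOf (ofAdd (1 : ZMod q))⟩
  cyc :=
    have : IsCyclic (Multiplicative (ZMod q))ˣ :=
      isCyclic_of_surjective toUnits.toMonoidHom toUnits.surjective
    inferInstance

theorem card_intLinearMap_zmod_eq_card {T : Type*} [AddCommGroup T] [Finite T] (q : ℕ) [NeZero q]
    (hT : ∀ t : T, q • t = 0) : Nat.card (T →ₗ[ℤ] ZMod q) = Nat.card T := by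
  have := hasEnoughRootsOfUnity_multiplicative_zmod q
  have : HasEnoughRootsOfUnity (Multiplicative (ZMod q)) (Monoid.exponent (Multiplicative T)) :=
    HasEnoughRootsOfUnity.of_dvd _ <| Monoid.exponent_dvd_of_forall_pow_eq_one fun g => hT g
  calc Nat.card (T →ₗ[ℤ] ZMod q)
      = Nat.card (Multiplicative T →* Multiplicative (ZMod q)) :=
        Nat.card_congr ((addMonoidHomLequivInt ℤ).symm.toEquiv.trans
          AddMonoidHom.toMultiplicative)
    _ = Nat.card (Multiplicative T →* (Multiplicative (ZMod q))ˣ) :=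
        Nat.card_congr (MulEquiv.monoidHomCongrRightEquiv toUnits)
    _ = Nat.card T := CommGroup.card_monoidHom_of_hasEnoughRootsOfUnity _ _

section SplitFunctional
variable {N : Type*} [AddCommGroup N] {σ : N →ₗ[ℤ] ℤ} {q : ℕ}

theorem torsion_eq_ker_of_forall_smul_eq_zero (hq : q ≠ 0)
    (hker : ∀ x ∈ ker σ, q • x = 0) : torsion ℤ N = ker σ := by
  ext y
  rw [mem_torsion_iff, mem_ker]
  constructor
  · rintro ⟨⟨a, ha⟩, hay⟩
    have : a * σ y = 0 := by simpa using congrArg σ hay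
    exact (mul_eq_zero.mp this).resolve_left (nonZeroDivisors.ne_zero ha)
  · intro hy
    refine ⟨⟨q, mem_nonZeroDivisors_of_ne_zero (by exact_mod_cast hq)⟩, ?_⟩
    simpa using hker y hy

theorem card_intLinearMap_zmod_eq_mul_card_torsion [Module.Finite ℤ N] [NeZero q] {ξ : N}
    (hξ : σ ξ = 1) (hker : ∀ x ∈ ker σ, q • x = 0) :
    Nat.card (N →ₗ[ℤ] ZMod q) = q * Nat.card (torsion ℤ N) := by
  have htors := torsion_eq_ker_of_forall_smul_eq_zero (NeZero.ne q) hker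
  have hsec : σ ∘ₗ toSpanSingleton ℤ N ξ = LinearMap.id := by ext; simp [hξ]
  let e : N ≃ₗ[ℤ] ker σ × ℤ :=
    ((exact_subtype_ker_map σ).splitSurjectiveEquiv (ker σ).injective_subtype ⟨_, hsec⟩).1
  have hkerq (t : ker σ) : q • t = 0 := Subtype.ext (hker t t.2)
  have : Finite (ker σ) := Module.finite_of_fg_torsion _ fun t =>
    ⟨⟨q, mem_nonZeroDivisors_of_ne_zero (by exact_mod_cast NeZero.ne q)⟩, by simpa using hkerq t⟩
  calc Nat.card (N →ₗ[ℤ] ZMod q)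
      = Nat.card ((ker σ →ₗ[ℤ] ZMod q) × (ℤ →ₗ[ℤ] ZMod q)) :=
        Nat.card_congr ((e.arrowCongr (.refl ℤ (ZMod q))).toEquiv.trans
          (coprodEquiv ℤ).symm.toEquiv)
    _ = Nat.card (ker σ) * q := by
        rw [Nat.card_prod, card_intLinearMap_zmod_eq_card q hkerq,
          Nat.card_congr (ringLmapEquivSelf ℤ ℤ (ZMod q)).toEquiv, Nat.card_zmod]
    _ = q * Nat.card (torsion ℤ N) := by rw [htors, mul_comm]

end SplitFunctional

def Submodule.liftQEquiv {R M P : Type*} [Ring R] [AddCommGroup M] [Module R M] [AddCommGroup P]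
    [Module R P] (p : Submodule R M) : {f : M →ₗ[R] P // p ≤ ker f} ≃ (M ⧸ p →ₗ[R] P) where
  toFun f := p.liftQ f f.2
  invFun g := ⟨g ∘ₗ p.mkQ, fun x hx => by simp [(Quotient.mk_eq_zero p).mpr hx]⟩
  left_inv f := by ext; simp
  right_inv g := by ext; simp

noncomputable def Matrix.vecMulKerEquiv {R V E M : Type*} [CommRing R] [Fintype V] [Fintype E]
    [AddCommGroup M] [Module R M] (A : Matrix V E R) :
    {c : V → M // ∀ e, ∑ v, A v e • c v = 0} ≃ ((V → R) ⧸ range A.mulVecLin →ₗ[R] M) :=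
  ((Module.piEquiv V R M).toEquiv.subtypeEquiv fun c => by
      simp only [Matrix.range_mulVecLin, span_le, Set.range_subset_iff, SetLike.mem_coe, mem_ker,
        LinearEquiv.coe_toEquiv, Module.piEquiv_apply_apply, Matrix.col_apply]).trans
    (liftQEquiv _)

@[simp]
theorem Matrix.vecMulKerEquiv_apply_mk {R V E M : Type*} [CommRing R] [Fintype V] [Fintype E]
    [AddCommGroup M] [Module R M] (A : Matrix V E R) (c : {c : V → M // ∀ e, ∑ v, A v e • c v = 0})
    (x : V → R) :
    A.vecMulKerEquiv c (Submodule.Quotient.mk x) = ∑ v, x v • c.1 v := by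
  simp [Matrix.vecMulKerEquiv, liftQEquiv, Module.piEquiv_apply_apply]

section IncMat
variable {V E : Type*} [DecidableEq V] {ends : E → V × V} (ℓ : E → ℕ)

theorem incMat_col (hloop : ∀ e, (ends e).1 ≠ (ends e).2) (e : E) :
    (incMat ends ℓ).col e = (ℓ e : ℤ) • (Pi.single (ends e).1 1 - Pi.single (ends e).2 1) := by
  ext v
  have := hloop e
  by_cases h1 : (ends e).1 = v <;> by_cases h2 : (ends e).2 = v <;>
    simp_all [incMat, eq_comm]

theorem sum_incMat_smul [Fintype V] {M : Type*} [AddCommGroup M]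
    (hloop : ∀ e, (ends e).1 ≠ (ends e).2) (c : V → M) (e : E) :
    ∑ v, incMat ends ℓ v e • c v = (ℓ e : ℤ) • (c (ends e).1 - c (ends e).2) := by
  have := congrArg (Module.piEquiv V ℤ M c) (incMat_col ℓ hloop e)
  rw [map_smul, map_sub] at this
  simpa [Module.piEquiv_apply_apply, Pi.single_apply] using this

end IncMat

section Connectivity
variable {V E : Type*} [DecidableEq V] [Fintype E] {ends : E → V × V} {ℓ : E → ℕ}
  {q : ℕ}

theorem smul_sub_single_mem_range_incMat (hloop : ∀ e, (ends e).1 ≠ (ends e).2)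
    (hadm : ∀ e, ℓ e ∣ q) {u w : V}
    (huw : Relation.ReflTransGen (fun a b => ∃ e, ends e = (a, b) ∨ ends e = (b, a)) u w) :
    (q : ℤ) • (Pi.single u 1 - Pi.single w 1 : V → ℤ) ∈ range (incMat ends ℓ).mulVecLin := by
  induction huw with
  | refl => simp
  | @tail w x _ hwx ih =>
    obtain ⟨e, he⟩ := hwx
    have hcol : (q : ℤ) • (Pi.single (ends e).1 1 - Pi.single (ends e).2 1 : V → ℤ) ∈
        range (incMat ends ℓ).mulVecLin := by
      obtain ⟨k, hk⟩ := hadm e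
      rw [hk, Nat.cast_mul, mul_comm, mul_smul, ← incMat_col ℓ hloop e, Matrix.range_mulVecLin]
      exact smul_mem _ _ (subset_span ⟨e, rfl⟩)
    have hstep : (q : ℤ) • (Pi.single w 1 - Pi.single x 1 : V → ℤ) ∈
        range (incMat ends ℓ).mulVecLin := by
      rcases he with he | he <;> rw [he] at hcol
      · exact hcol
      · simpa [smul_sub] using neg_mem hcol
    simpa [smul_sub] using add_mem ih hstep

theorem smul_mem_range_incMat_of_sum_eq_zero [Fintype V] (hloop : ∀ e, (ends e).1 ≠ (ends e).2)
    (hconn : ∀ u v : V,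
      Relation.ReflTransGen (fun a b => ∃ e, ends e = (a, b) ∨ ends e = (b, a)) u v)
    (hadm : ∀ e, ℓ e ∣ q) {x : V → ℤ} (hx : ∑ v, x v = 0) :
    (q : ℤ) • x ∈ range (incMat ends ℓ).mulVecLin := by
  obtain _ | ⟨⟨v₀⟩⟩ := isEmpty_or_nonempty V
  · simp [Subsingleton.elim x 0]
  have hx' : x = ∑ v, x v • (Pi.single v 1 - Pi.single v₀ 1 : V → ℤ) := by
    rw [Finset.sum_congr rfl fun v _ => smul_sub _ _ _, Finset.sum_sub_distrib,
      ← Finset.sum_smul, hx, zero_smul, sub_zero, ← pi_eq_sum_univ' x]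
  rw [hx', Finset.smul_sum]
  refine sum_mem fun v _ => ?_
  rw [smul_comm]
  exact smul_mem _ _ (smul_sub_single_mem_range_incMat hloop hadm (hconn v v₀))

end Connectivity

theorem stmt15_general {V E : Type*} [Fintype V] [Fintype E] [DecidableEq V] [Nonempty V]
    (ends : E → V × V) (hloop : ∀ e, (ends e).1 ≠ (ends e).2)
    (hconn : ∀ u v : V,
      Relation.ReflTransGen (fun a b => ∃ e, ends e = (a, b) ∨ ends e = (b, a)) u v)
    (ℓ : E → ℕ) (q : ℕ) (hq : 0 < q) (hadm : ∀ e, ℓ e ∣ q) :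
    Nat.card {c : V → ZMod q //
        ∀ e, (ℓ e : ZMod q) * c (ends e).1 = (ℓ e : ZMod q) * c (ends e).2}
      = q * Nat.card (Submodule.torsion ℤ
          ((V → ℤ) ⧸ LinearMap.range (incMat ends ℓ).mulVecLin)) := by
  have : NeZero q := ⟨hq.ne'⟩
  obtain ⟨v₀⟩ := ‹Nonempty V›
  let R := range (incMat ends ℓ).mulVecLin
  have hcolor : {c : V → ZMod q // ∀ e, (ℓ e : ZMod q) * c (ends e).1 = ℓ e * c (ends e).2} ≃
      {c : V → ZMod q // ∀ e, ∑ v, incMat ends ℓ v e • c v = 0} :=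
    Equiv.subtypeEquivRight fun c => by
      simp only [sum_incMat_smul ℓ hloop, natCast_zsmul, nsmul_eq_mul, mul_sub, sub_eq_zero]
  -- the constant coloring `1` induces the vertex-sum functional on the cokernel
  let σ : (V → ℤ) ⧸ R →ₗ[ℤ] ℤ := (incMat ends ℓ).vecMulKerEquiv
    ⟨1, fun e => by rw [sum_incMat_smul ℓ hloop]; simp⟩
  have hσ (x : V → ℤ) : σ (Submodule.Quotient.mk x) = ∑ v, x v :=
    ((incMat ends ℓ).vecMulKerEquiv_apply_mk _ x).trans (by simp)
  rw [Nat.card_congr (hcolor.trans (incMat ends ℓ).vecMulKerEquiv)]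
  refine card_intLinearMap_zmod_eq_mul_card_torsion (σ := σ)
    (ξ := Submodule.Quotient.mk (Pi.single v₀ 1)) (by simp [hσ]) fun y hy => ?_
  obtain ⟨x, rfl⟩ := R.mkQ_surjective y
  rw [mem_ker, mkQ_apply, hσ] at hy
  rw [← map_nsmul, mkQ_apply, Quotient.mk_eq_zero, ← natCast_zsmul]
  exact smul_mem_range_incMat_of_sum_eq_zero hloop hconn hadm hy

/-- For a labelled connected graph all of whose edges are dotted and an admissible `q`, the
number of arithmetic `q`-colorings equals `q · m(∅)`, where `m(∅)` is the cardinality of the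
torsion subgroup of `ℤ^V / ⟨columns of [X_D]⟩`. -/
theorem stmt15 {V E : Type*} [Fintype V] [Fintype E] [DecidableEq V] [Nonempty V]
    (ends : E → V × V) (hloop : ∀ e, (ends e).1 ≠ (ends e).2)
    (hconn : ∀ u v : V,
      Relation.ReflTransGen (fun a b => ∃ e, ends e = (a, b) ∨ ends e = (b, a)) u v)
    (ℓ : E → ℕ) (hℓ : ∀ e, 0 < ℓ e) (q : ℕ) (hq : 0 < q) (hadm : ∀ e, ℓ e ∣ q) :
    Nat.card {c : V → ZMod q //
        ∀ e, (ℓ e : ZMod q) * c (ends e).1 = (ℓ e : ZMod q) * c (ends e).2}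
      = q * Nat.card (Submodule.torsion ℤ
          ((V → ℤ) ⧸ LinearMap.range (incMat ends ℓ).mulVecLin)) :=
  stmt15_general ends hloop hconn ℓ q hq hadm
end
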